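/- arXiv:2503.11526 — 2 statements merged into one kernel-verified Lean document; each statement's English description precedes it below -/
import Mathlib

section
/- Let c be a child of v and let x ∈ T_c with x ≠ c. If x is s-maximal in T_c but not s-maximal in T_v, then next_c(x) is not s-maximal in T_v either. -/
open Finset
open scoped Classical

noncomputable section

variable {V : Type} [Fintype V] [PartialOrder V]

/-- The chain `T[v,i]` : all vertices `p` with `v ≤ p ≤ i`. -/
def chainCC (v i : V) : Finset V := univ.filter (fun p => v ≤ p ∧ p ≤ i)

/-- The chain `T[v,i)` : `T[v,i]` without `i`. -/
def chainCO (v i : V) : Finset V := (chainCC v i).erase i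

/-- `p` is the parent of `j`. -/
def IsParent (p j : V) : Prop := p < j ∧ ¬ ∃ q, p < q ∧ q < j

/-- `u` is s-maximal in `T_v`. -/
def SMax (s : V → ℝ) (v u : V) : Prop := v ≤ u ∧ ∀ p ∈ chainCO v u, s p < s u

/-- The window of `v`. -/
def win (w : V → ℝ) (w0 : ℝ) (v : V) : Finset V :=
  univ.filter (fun i => v ≤ i ∧ ∑ j ∈ chainCC v i, w j ≤ w0)

/-- `win*_v`: the s-maximal vertices of the window of `v`. -/
def winStar (w : V → ℝ) (w0 : ℝ) (s : V → ℝ) (v : V) : Finset V :=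
  (win w w0 v).filter (fun i => SMax s v i)

/-- `win⁻_v = win_v \ win*_v`. -/
def winMinus (w : V → ℝ) (w0 : ℝ) (s : V → ℝ) (v : V) : Finset V :=
  win w w0 v \ winStar w w0 s v

/-- `next_v(u)`: the greatest (closest to `u`) s-maximal element of `T[v,u)`,
if such a greatest element exists (junk value `v` otherwise). -/
def nxt (s : V → ℝ) (v u : V) : V :=
  if h : ∃ x ∈ chainCO v u, SMax s v x ∧ ∀ y ∈ chainCO v u, SMax s v y → y ≤ x
  then h.choose else v

/-- The vertices `j` outside `T[v,i]` whose parent lies in `T[v,i]`. -/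
def branchOff (v i : V) : Finset V :=
  univ.filter (fun j => j ∉ chainCC v i ∧ ∃ p ∈ chainCC v i, IsParent p j)

/-- `sum_F(v,i) = Σ F(j)` over `j ∉ T[v,i]` whose parent lies in `T[v,i]`. -/
def sumF (F : V → ℝ) (v i : V) : ℝ := ∑ j ∈ branchOff v i, F j

/-- `cost_F(v,i)`: `sum_F(v,i) + s_i` if `i ∈ win*_v`, and
`sum_F(v,i) + s_{next_v(i)}` otherwise (in particular for `i ∈ win⁻_v`). -/
def costF (w : V → ℝ) (w0 : ℝ) (s : V → ℝ) (F : V → ℝ) (v i : V) : ℝ :=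
  if i ∈ winStar w w0 s v then sumF F v i + s i else sumF F v i + s (nxt s v i)

end

section Tree

variable {V : Type} [Fintype V] [PartialOrder V]

theorem mem_chainCO {v i p : V} : p ∈ chainCO v i ↔ p ≠ i ∧ v ≤ p ∧ p ≤ i := by
  simp [chainCO, chainCC]

/-- `T[v,x)` is `T[c,x)` plus the single vertex `v`, since ancestors of `x` are comparable with `c`
and nothing lies strictly between `v` and `c`. -/
theorem SMax.of_isParent (htree : ∀ a b c : V, a ≤ c → b ≤ c → a ≤ b ∨ b ≤ a)
    {s : V → ℝ} {v c x : V} (hc : IsParent v c) (hcx : c ≤ x)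
    (hx : SMax s c x) (hvx : s v < s x) : SMax s v x := by
  refine ⟨hc.1.le.trans hcx, fun p hp => ?_⟩
  obtain ⟨hpx, hvp, hpx'⟩ := mem_chainCO.1 hp
  rcases htree p c x hpx' hcx with hpc | hcp
  · rcases hvp.eq_or_lt with rfl | hvp
    · exact hvx
    rcases hpc.eq_or_lt with rfl | hpc
    · exact hx.2 p (mem_chainCO.2 ⟨hpx, le_rfl, hcx⟩)
    · exact absurd ⟨p, hvp, hpc⟩ hc.2
  · exact hx.2 p (mem_chainCO.2 ⟨hpx, hcp, hpx'⟩)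

theorem exists_greatest_sMax_mem_chainCO (htree : ∀ a b c : V, a ≤ c → b ≤ c → a ≤ b ∨ b ≤ a)
    (s : V → ℝ) {v u : V} (hvu : v < u) :
    ∃ y ∈ chainCO v u, SMax s v y ∧ ∀ z ∈ chainCO v u, SMax s v z → z ≤ y := by
  have hv : v ∈ (chainCO v u).filter (SMax s v) := by
    refine mem_filter.2 ⟨mem_chainCO.2 ⟨hvu.ne, le_rfl, hvu.le⟩, le_rfl, fun p hp => ?_⟩
    obtain ⟨hpv, hvp, hpv'⟩ := mem_chainCO.1 hp
    exact absurd (le_antisymm hpv' hvp) hpv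
  obtain ⟨y, hy⟩ := Finset.exists_maximal ⟨v, hv⟩
  obtain ⟨hyu, hys⟩ := mem_filter.1 hy.prop
  refine ⟨y, hyu, hys, fun z hzu hzs => ?_⟩
  rcases htree z y u (mem_chainCO.1 hzu).2.2 (mem_chainCO.1 hyu).2.2 with hzy | hyz
  · exact hzy
  · exact (hy.eq_of_le (mem_filter.2 ⟨hzu, hzs⟩) hyz).ge

theorem nxt_mem_chainCO (htree : ∀ a b c : V, a ≤ c → b ≤ c → a ≤ b ∨ b ≤ a)
    (s : V → ℝ) {v u : V} (hvu : v < u) : nxt s v u ∈ chainCO v u := by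
  have hex := exists_greatest_sMax_mem_chainCO htree s hvu
  rw [nxt, dif_pos hex]
  exact hex.choose_spec.1

end Tree

theorem stmt_11_general (V : Type) [Fintype V] [PartialOrder V]
    (htree : ∀ a b c : V, a ≤ c → b ≤ c → a ≤ b ∨ b ≤ a)
    (s : V → ℝ)
    (v c : V) (hc : IsParent v c)
    (x : V) (hx : c ≤ x) (hxc : x ≠ c)
    (h1 : SMax s c x) (h2 : ¬ SMax s v x) :
    ¬ SMax s v (nxt s c x) := by
  intro hu
  obtain ⟨hux, hcu, hux'⟩ := mem_chainCO.1 (nxt_mem_chainCO htree s (hx.lt_of_ne hxc.symm))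
  have hvu : v < nxt s c x := hc.1.trans_le hcu
  have hsu : s (nxt s c x) < s x := h1.2 _ (mem_chainCO.2 ⟨hux, hcu, hux'⟩)
  have hsv : s v < s (nxt s c x) := hu.2 v (mem_chainCO.2 ⟨hvu.ne, le_rfl, hvu.le⟩)
  exact h2 (SMax.of_isParent htree hc hx h1 (hsv.trans hsu))

theorem stmt_11 (V : Type) [Fintype V] [Nonempty V] [PartialOrder V]
    (htree : ∀ a b c : V, a ≤ c → b ≤ c → a ≤ b ∨ b ≤ a)
    (w : V → ℝ) (s : V → ℝ) (w0 : ℝ)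
    (hw : ∀ i : V, 0 ≤ w i) (hw0 : 0 ≤ w0)
    (v c : V) (hc : IsParent v c)
    (x : V) (hx : c ≤ x) (hxc : x ≠ c)
    (h1 : SMax s c x) (h2 : ¬ SMax s v x) :
    ¬ SMax s v (nxt s c x) :=
  stmt_11_general V htree s v c hc x hx hxc h1 h2
end

section
/- Assume w_j ≤ w_0 for every j ∈ V. Then for every v ∈ V, OPT(v) = min over i ∈ win_v of ( max_{p ∈ T[v,i]} s_p + Σ_j OPT(j) ), where the inner sum ranges over all j ∈ V with j ∉ T[v,i] whose parent lies in T[v,i]. (The minimum is over a nonempty set since v ∈ win_v, and all OPT values exist.) -/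
open Finset
open scoped Classical

noncomputable section

variable {V : Type} [Fintype V] [PartialOrder V]

/-- A chain partition of the subtree `T_v`: a family of nonempty pairwise-disjoint
parts covering `T_v`, each part pairwise comparable, order-convex, and of total
weight at most `w0`. -/
def IsChainPartition (w : V → ℝ) (w0 : ℝ) (v : V) (P : Finset (Finset V)) : Prop :=
  (∀ C ∈ P, C.Nonempty) ∧
  (∀ C ∈ P, ∀ a ∈ C, v ≤ a) ∧
  (∀ u : V, v ≤ u → ∃! C, C ∈ P ∧ u ∈ C) ∧
  (∀ C ∈ P, ∀ a ∈ C, ∀ b ∈ C, a ≤ b ∨ b ≤ a) ∧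
  (∀ C ∈ P, ∀ a ∈ C, ∀ b ∈ C, ∀ p : V, a ≤ p → p ≤ b → p ∈ C) ∧
  (∀ C ∈ P, ∑ j ∈ C, w j ≤ w0)

/-- Total cost of a partition: the sum over parts `C` of `max_{j ∈ C} s_j`. -/
def totalCost (s : V → ℝ) (P : Finset (Finset V)) : ℝ :=
  ∑ C ∈ P, sSup (s '' (C : Set V))

/-- `OPT v`: the minimum total cost of a chain partition of `T_v`. -/
def OPT (w : V → ℝ) (w0 : ℝ) (s : V → ℝ) (v : V) : ℝ :=
  sInf {c : ℝ | ∃ P : Finset (Finset V), IsChainPartition w w0 v P ∧ c = totalCost s P}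

end


section Comparable

variable {α : Type*} [PartialOrder α]

lemma Finset.exists_le_of_pairwise_comparable {A : Finset α} (hA : A.Nonempty)
    (hcomp : ∀ a ∈ A, ∀ b ∈ A, a ≤ b ∨ b ≤ a) : ∃ m ∈ A, ∀ a ∈ A, m ≤ a := by
  obtain ⟨m, hm⟩ := A.exists_minimal hA
  exact ⟨m, hm.1, fun a ha => (hcomp m hm.1 a ha).elim id (hm.2 ha)⟩

lemma Finset.exists_ge_of_pairwise_comparable {A : Finset α} (hA : A.Nonempty)
    (hcomp : ∀ a ∈ A, ∀ b ∈ A, a ≤ b ∨ b ≤ a) : ∃ m ∈ A, ∀ a ∈ A, a ≤ m := by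
  obtain ⟨m, hm⟩ := A.exists_maximal hA
  exact ⟨m, hm.1, fun a ha => (hcomp a ha m hm.1).elim id (hm.2 ha)⟩

end Comparable

section Tree

variable {V : Type} [Fintype V] [PartialOrder V] {v i j j' u : V}

lemma mem_chainCC : u ∈ chainCC v i ↔ v ≤ u ∧ u ≤ i := by
  simp [chainCC]

lemma coe_chainCC (v i : V) : (chainCC v i : Set V) = {p : V | v ≤ p ∧ p ≤ i} := by
  ext p; simp [mem_chainCC]

lemma mem_branchOff :
    j ∈ branchOff v i ↔ j ∉ chainCC v i ∧ ∃ p ∈ chainCC v i, IsParent p j := by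
  simp [branchOff]

lemma mem_win {w : V → ℝ} {w0 : ℝ} :
    i ∈ win w w0 v ↔ v ≤ i ∧ ∑ j ∈ chainCC v i, w j ≤ w0 := by
  simp [win]

lemma le_of_mem_branchOff (hj : j ∈ branchOff v i) : v ≤ j := by
  obtain ⟨-, p, hp, hpj⟩ := mem_branchOff.1 hj
  exact (mem_chainCC.1 hp).1.trans hpj.1.le

lemma not_le_of_mem_branchOff (hj : j ∈ branchOff v i) (hu : u ∈ chainCC v i) : ¬ j ≤ u :=
  fun h => (mem_branchOff.1 hj).1
    (mem_chainCC.2 ⟨le_of_mem_branchOff hj, h.trans (mem_chainCC.1 hu).2⟩)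

variable (htree : ∀ a b c : V, a ≤ c → b ≤ c → a ≤ b ∨ b ≤ a)

include htree in
lemma exists_isParent_of_lt (h : v < j) : ∃ p, v ≤ p ∧ IsParent p j := by
  set B := univ.filter (fun p => v ≤ p ∧ p < j)
  have hB : ∀ p, p ∈ B ↔ v ≤ p ∧ p < j := by simp [B]
  obtain ⟨p, hpB, hpmax⟩ := Finset.exists_ge_of_pairwise_comparable ⟨v, (hB v).2 ⟨le_rfl, h⟩⟩
    fun a ha b hb => htree a b j ((hB a).1 ha).2.le ((hB b).1 hb).2.le
  obtain ⟨hvp, hpj⟩ := (hB p).1 hpB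
  exact ⟨p, hvp, hpj, fun ⟨q, hpq, hqj⟩ =>
    (hpmax q ((hB q).2 ⟨hvp.trans hpq.le, hqj⟩)).not_gt hpq⟩

include htree in
lemma eq_of_le_of_mem_branchOff (hj : j ∈ branchOff v i) (hj' : j' ∈ branchOff v i)
    (h : j ≤ j') : j = j' := by
  obtain ⟨-, p, hp, hpj'⟩ := mem_branchOff.1 hj'
  refine h.eq_or_lt.resolve_right fun hlt => ?_
  rcases htree p j j' hpj'.1.le h with hpj | hjp
  · rcases hpj.eq_or_lt with rfl | hpj
    · exact (mem_branchOff.1 hj).1 hp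
    · exact hpj'.2 ⟨j, hpj, hlt⟩
  · exact not_le_of_mem_branchOff hj hp hjp

include htree in
lemma eq_of_mem_branchOff_of_le (hj : j ∈ branchOff v i) (hj' : j' ∈ branchOff v i)
    (hju : j ≤ u) (hj'u : j' ≤ u) : j = j' :=
  (htree j j' u hju hj'u).elim (eq_of_le_of_mem_branchOff htree hj hj')
    fun h => (eq_of_le_of_mem_branchOff htree hj' hj h).symm

include htree in
lemma exists_mem_branchOff_le (hvi : v ≤ i) (hvu : v ≤ u) (hu : u ∉ chainCC v i) :
    ∃ j ∈ branchOff v i, j ≤ u := by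
  set A := univ.filter (fun p => v ≤ p ∧ p ≤ u ∧ p ∉ chainCC v i)
  have hA : ∀ p, p ∈ A ↔ v ≤ p ∧ p ≤ u ∧ p ∉ chainCC v i := by simp [A]
  obtain ⟨j, hjA, hjmin⟩ := Finset.exists_le_of_pairwise_comparable ⟨u, (hA u).2 ⟨hvu, le_rfl, hu⟩⟩
    fun a ha b hb => htree a b u ((hA a).1 ha).2.1 ((hA b).1 hb).2.1
  obtain ⟨hvj, hju, hj⟩ := (hA j).1 hjA
  have hvj : v < j := hvj.lt_of_ne fun h => hj (mem_chainCC.2 ⟨h.le, h ▸ hvi⟩)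
  obtain ⟨p, hvp, hpj⟩ := exists_isParent_of_lt htree hvj
  have hp : p ∈ chainCC v i := by
    by_contra hp
    exact (hjmin p ((hA p).2 ⟨hvp, hpj.1.le.trans hju, hp⟩)).not_gt hpj.1
  exact ⟨j, mem_branchOff.2 ⟨hj, p, hp, hpj⟩, hju⟩

end Tree

section ChainPartition

variable {V : Type} [Fintype V] [PartialOrder V] {w s : V → ℝ} {w0 : ℝ} {v i j : V}
  {C : Finset V} {P : Finset (Finset V)} {Q : V → Finset (Finset V)}

lemma isChainPartition_singletons (hwin : ∀ j, w j ≤ w0) (v : V) :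
    IsChainPartition w w0 v ((univ.filter (v ≤ ·)).image singleton) := by
  refine ⟨?_, ?_, fun u hu => ⟨{u}, by simpa using hu, ?_⟩, ?_, ?_, ?_⟩
  · simp
  · simp
  · rintro C ⟨hC, huC⟩
    obtain ⟨a, -, rfl⟩ := mem_image.1 hC
    rw [mem_singleton.1 huC]
  · simp
  · simp only [mem_image, mem_filter, mem_univ, true_and, forall_exists_index, and_imp]
    rintro _ a - rfl x hx y hy p hxp hpy
    rw [mem_singleton] at hx hy ⊢
    subst hx hy
    exact le_antisymm hpy hxp
  · simp [hwin]

lemma finite_setOf_totalCost (w : V → ℝ) (w0 : ℝ) (s : V → ℝ) (v : V) :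
    {c | ∃ P, IsChainPartition w w0 v P ∧ c = totalCost s P}.Finite :=
  (Set.finite_range (totalCost s)).subset fun _ ⟨P, _, hc⟩ => ⟨P, hc.symm⟩

lemma OPT_le_totalCost (hP : IsChainPartition w w0 v P) : OPT w w0 s v ≤ totalCost s P :=
  csInf_le (finite_setOf_totalCost w w0 s v).bddBelow ⟨P, hP, rfl⟩

lemma exists_totalCost_eq_OPT (hwin : ∀ j, w j ≤ w0) (s : V → ℝ) (v : V) :
    ∃ P, IsChainPartition w w0 v P ∧ totalCost s P = OPT w w0 s v := by
  have hne : {c | ∃ P, IsChainPartition w w0 v P ∧ c = totalCost s P}.Nonempty :=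
    ⟨_, _, isChainPartition_singletons hwin v, rfl⟩
  obtain ⟨P, hP, hc⟩ := hne.csInf_mem (finite_setOf_totalCost w w0 s v)
  exact ⟨P, hP, hc.symm⟩

noncomputable def partsAbove (P : Finset (Finset V)) (j : V) : Finset (Finset V) :=
  P.filter fun C => ∀ a ∈ C, j ≤ a

lemma mem_partsAbove : C ∈ partsAbove P j ↔ C ∈ P ∧ ∀ a ∈ C, j ≤ a :=
  mem_filter

lemma exists_mem_win_chainCC_mem (hP : IsChainPartition w w0 v P) :
    ∃ i ∈ win w w0 v, chainCC v i ∈ P := by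
  obtain ⟨hne, hge, hcov, hcomp, hconv, hwt⟩ := hP
  obtain ⟨C, ⟨hC, hvC⟩, -⟩ := hcov v le_rfl
  obtain ⟨i, hiC, himax⟩ := Finset.exists_ge_of_pairwise_comparable ⟨v, hvC⟩ (hcomp C hC)
  have hCeq : C = chainCC v i := by
    ext p
    refine ⟨fun hp => mem_chainCC.2 ⟨hge C hC p hp, himax p hp⟩, fun hp => ?_⟩
    exact hconv C hC v hvC i hiC p (mem_chainCC.1 hp).1 (mem_chainCC.1 hp).2
  exact ⟨i, mem_win.2 ⟨hge C hC i hiC, hCeq ▸ hwt C hC⟩, hCeq ▸ hC⟩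

variable (htree : ∀ a b c : V, a ≤ c → b ≤ c → a ≤ b ∨ b ≤ a)

include htree in
lemma pairwiseDisjoint_of_isChainPartition
    (hQ : ∀ j ∈ branchOff v i, IsChainPartition w w0 j (Q j)) :
    (branchOff v i : Set V).PairwiseDisjoint Q := by
  intro j hj j' hj' hne
  refine Finset.disjoint_left.2 fun C hCj hCj' => hne ?_
  obtain ⟨a, ha⟩ := (hQ j hj).1 C hCj
  exact eq_of_mem_branchOff_of_le htree hj hj' ((hQ j hj).2.1 C hCj a ha)
    ((hQ j' hj').2.1 C hCj' a ha)

lemma mem_insert_chainCC_biUnion : C ∈ insert (chainCC v i) ((branchOff v i).biUnion Q) ↔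
    C = chainCC v i ∨ ∃ j ∈ branchOff v i, C ∈ Q j := by
  simp

include htree in
lemma existsUnique_mem_insert_biUnion (hvi : v ≤ i)
    (hQ : ∀ j ∈ branchOff v i, IsChainPartition w w0 j (Q j)) {u : V} (hvu : v ≤ u) :
    ∃! C, C ∈ insert (chainCC v i) ((branchOff v i).biUnion Q) ∧ u ∈ C := by
  by_cases hu : u ∈ chainCC v i
  · refine ⟨chainCC v i, ⟨mem_insert_self _ _, hu⟩, fun C ⟨hC, huC⟩ => ?_⟩
    rcases mem_insert_chainCC_biUnion.1 hC with rfl | ⟨j, hj, hCj⟩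
    · rfl
    · exact absurd ((hQ j hj).2.1 C hCj u huC) (not_le_of_mem_branchOff hj hu)
  · obtain ⟨j, hj, hju⟩ := exists_mem_branchOff_le htree hvi hvu hu
    obtain ⟨C, ⟨hCj, huC⟩, huniq⟩ := (hQ j hj).2.2.1 u hju
    refine ⟨C, ⟨mem_insert_chainCC_biUnion.2 (Or.inr ⟨j, hj, hCj⟩), huC⟩,
      fun C' ⟨hC', huC'⟩ => ?_⟩
    rcases mem_insert_chainCC_biUnion.1 hC' with rfl | ⟨j', hj', hC'j'⟩
    · exact absurd huC' hu
    · obtain rfl := eq_of_mem_branchOff_of_le htree hj' hj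
        ((hQ j' hj').2.1 C' hC'j' u huC') hju
      exact huniq C' ⟨hC'j', huC'⟩

include htree in
lemma isChainPartition_insert_biUnion (hi : i ∈ win w w0 v)
    (hQ : ∀ j ∈ branchOff v i, IsChainPartition w w0 j (Q j)) :
    IsChainPartition w w0 v (insert (chainCC v i) ((branchOff v i).biUnion Q)) := by
  obtain ⟨hvi, hwt⟩ := mem_win.1 hi
  refine ⟨?_, ?_, fun u => existsUnique_mem_insert_biUnion htree hvi hQ, ?_, ?_, ?_⟩
  · intro C hC
    rcases mem_insert_chainCC_biUnion.1 hC with rfl | ⟨j, hj, hCj⟩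
    · exact ⟨v, mem_chainCC.2 ⟨le_rfl, hvi⟩⟩
    · exact (hQ j hj).1 C hCj
  · intro C hC a ha
    rcases mem_insert_chainCC_biUnion.1 hC with rfl | ⟨j, hj, hCj⟩
    · exact (mem_chainCC.1 ha).1
    · exact (le_of_mem_branchOff hj).trans ((hQ j hj).2.1 C hCj a ha)
  · intro C hC a ha b hb
    rcases mem_insert_chainCC_biUnion.1 hC with rfl | ⟨j, hj, hCj⟩
    · exact htree a b i (mem_chainCC.1 ha).2 (mem_chainCC.1 hb).2
    · exact (hQ j hj).2.2.2.1 C hCj a ha b hb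
  · intro C hC a ha b hb p hap hpb
    rcases mem_insert_chainCC_biUnion.1 hC with rfl | ⟨j, hj, hCj⟩
    · exact mem_chainCC.2 ⟨(mem_chainCC.1 ha).1.trans hap, hpb.trans (mem_chainCC.1 hb).2⟩
    · exact (hQ j hj).2.2.2.2.1 C hCj a ha b hb p hap hpb
  · intro C hC
    rcases mem_insert_chainCC_biUnion.1 hC with rfl | ⟨j, hj, hCj⟩
    · exact hwt
    · exact (hQ j hj).2.2.2.2.2 C hCj

include htree in
lemma totalCost_insert_biUnion (hvi : v ≤ i)
    (hQ : ∀ j ∈ branchOff v i, IsChainPartition w w0 j (Q j)) :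
    totalCost s (insert (chainCC v i) ((branchOff v i).biUnion Q)) =
      sSup (s '' {p : V | v ≤ p ∧ p ≤ i}) + ∑ j ∈ branchOff v i, totalCost s (Q j) := by
  have hv : v ∈ chainCC v i := mem_chainCC.2 ⟨le_rfl, hvi⟩
  have hnot : chainCC v i ∉ (branchOff v i).biUnion Q := by
    simp only [mem_biUnion, not_exists, not_and]
    exact fun j hj hCj => not_le_of_mem_branchOff hj hv ((hQ j hj).2.1 _ hCj v hv)
  rw [totalCost, sum_insert hnot, sum_biUnion (pairwiseDisjoint_of_isChainPartition htree hQ),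
    coe_chainCC]
  rfl

include htree in
lemma OPT_le_of_mem_win (hwin : ∀ j, w j ≤ w0) (hi : i ∈ win w w0 v) :
    OPT w w0 s v ≤ sSup (s '' {p : V | v ≤ p ∧ p ≤ i}) + ∑ j ∈ branchOff v i, OPT w w0 s j := by
  choose Q hQ hcost using fun j => exists_totalCost_eq_OPT hwin s j
  calc OPT w w0 s v ≤ totalCost s (insert (chainCC v i) ((branchOff v i).biUnion Q)) :=
        OPT_le_totalCost (isChainPartition_insert_biUnion htree hi fun j _ => hQ j)
    _ = _ := by
        rw [totalCost_insert_biUnion htree (mem_win.1 hi).1 fun j _ => hQ j]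
        simp only [hcost]

include htree in
lemma exists_mem_branchOff_forall_le (hP : IsChainPartition w w0 v P) (hvi : v ≤ i)
    (hi : chainCC v i ∈ P) (hC : C ∈ P) (hne : C ≠ chainCC v i) :
    ∃ j ∈ branchOff v i, ∀ a ∈ C, j ≤ a := by
  obtain ⟨m, hm, hmin⟩ := Finset.exists_le_of_pairwise_comparable (hP.1 C hC) (hP.2.2.2.1 C hC)
  have hvm := hP.2.1 C hC m hm
  have hmi : m ∉ chainCC v i := fun hmi => hne ((hP.2.2.1 m hvm).unique ⟨hC, hm⟩ ⟨hi, hmi⟩)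
  obtain ⟨j, hj, hjm⟩ := exists_mem_branchOff_le htree hvi hvm hmi
  exact ⟨j, hj, fun a ha => hjm.trans (hmin a ha)⟩

include htree in
lemma isChainPartition_partsAbove (hP : IsChainPartition w w0 v P) (hvi : v ≤ i)
    (hi : chainCC v i ∈ P) (hj : j ∈ branchOff v i) :
    IsChainPartition w w0 j (partsAbove P j) := by
  have hsub : partsAbove P j ⊆ P := filter_subset _ _
  refine ⟨fun C hC => hP.1 C (hsub hC), fun C hC => (mem_partsAbove.1 hC).2,
    fun u hju => ?_, fun C hC => hP.2.2.2.1 C (hsub hC), fun C hC => hP.2.2.2.2.1 C (hsub hC),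
    fun C hC => hP.2.2.2.2.2 C (hsub hC)⟩
  have hvu := (le_of_mem_branchOff hj).trans hju
  obtain ⟨C, ⟨hC, huC⟩, huniq⟩ := hP.2.2.1 u hvu
  have hne : C ≠ chainCC v i := by
    rintro rfl
    exact not_le_of_mem_branchOff hj huC hju
  obtain ⟨j', hj', hj'C⟩ := exists_mem_branchOff_forall_le htree hP hvi hi hC hne
  obtain rfl := eq_of_mem_branchOff_of_le htree hj' hj (hj'C u huC) hju
  exact ⟨C, ⟨mem_partsAbove.2 ⟨hC, hj'C⟩, huC⟩, fun C' ⟨hC', huC'⟩ => huniq C' ⟨hsub hC', huC'⟩⟩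

include htree in
lemma erase_chainCC_eq_biUnion_partsAbove (hP : IsChainPartition w w0 v P) (hvi : v ≤ i)
    (hi : chainCC v i ∈ P) : P.erase (chainCC v i) = (branchOff v i).biUnion (partsAbove P) := by
  ext C
  simp only [mem_erase, mem_biUnion, mem_partsAbove]
  constructor
  · rintro ⟨hne, hC⟩
    obtain ⟨j, hj, hjC⟩ := exists_mem_branchOff_forall_le htree hP hvi hi hC hne
    exact ⟨j, hj, hC, hjC⟩
  · rintro ⟨j, hj, hC, hjC⟩
    refine ⟨?_, hC⟩
    rintro rfl
    have hv : v ∈ chainCC v i := mem_chainCC.2 ⟨le_rfl, hvi⟩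
    exact not_le_of_mem_branchOff hj hv (hjC v hv)

include htree in
lemma exists_mem_win_le_OPT (hwin : ∀ j, w j ≤ w0) (s : V → ℝ) (v : V) :
    ∃ i ∈ win w w0 v,
      sSup (s '' {p : V | v ≤ p ∧ p ≤ i}) + ∑ j ∈ branchOff v i, OPT w w0 s j ≤ OPT w w0 s v := by
  obtain ⟨P, hP, hcost⟩ := exists_totalCost_eq_OPT hwin s v
  obtain ⟨i, hi, hiP⟩ := exists_mem_win_chainCC_mem hP
  have hvi := (mem_win.1 hi).1
  have hparts := fun j (hj : j ∈ branchOff v i) => isChainPartition_partsAbove htree hP hvi hiP hj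
  refine ⟨i, hi, ?_⟩
  calc _ ≤ sSup (s '' {p : V | v ≤ p ∧ p ≤ i}) +
          ∑ j ∈ branchOff v i, totalCost s (partsAbove P j) := by
        gcongr with j hj
        exact OPT_le_totalCost (hparts j hj)
    _ = totalCost s (insert (chainCC v i) ((branchOff v i).biUnion (partsAbove P))) :=
        (totalCost_insert_biUnion htree hvi hparts).symm
    _ = OPT w w0 s v := by
        rw [← erase_chainCC_eq_biUnion_partsAbove htree hP hvi hiP, insert_erase hiP, hcost]

end ChainPartition

theorem stmt_12_general (V : Type) [Fintype V] [PartialOrder V]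
    (htree : ∀ a b c : V, a ≤ c → b ≤ c → a ≤ b ∨ b ≤ a)
    (w : V → ℝ) (s : V → ℝ) (w0 : ℝ)
    (hwin : ∀ j : V, w j ≤ w0)
    (v : V) :
    IsLeast {c : ℝ | ∃ i ∈ win w w0 v,
        c = sSup (s '' {p : V | v ≤ p ∧ p ≤ i}) + ∑ j ∈ branchOff v i, OPT w w0 s j}
      (OPT w w0 s v) := by
  refine ⟨?_, fun c ⟨i, hi, hc⟩ => hc ▸ OPT_le_of_mem_win htree hwin hi⟩
  obtain ⟨i, hi, hle⟩ := exists_mem_win_le_OPT htree hwin s v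
  exact ⟨i, hi, (hle.antisymm (OPT_le_of_mem_win htree hwin hi)).symm⟩

theorem stmt_12 (V : Type) [Fintype V] [Nonempty V] [PartialOrder V]
    (htree : ∀ a b c : V, a ≤ c → b ≤ c → a ≤ b ∨ b ≤ a)
    (w : V → ℝ) (s : V → ℝ) (w0 : ℝ)
    (hw : ∀ i : V, 0 ≤ w i) (hw0 : 0 ≤ w0)
    (hwin : ∀ j : V, w j ≤ w0)
    (v : V) :
    IsLeast {c : ℝ | ∃ i ∈ win w w0 v,
        c = sSup (s '' {p : V | v ≤ p ∧ p ≤ i}) + ∑ j ∈ branchOff v i, OPT w w0 s j}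
      (OPT w w0 s v) :=
  stmt_12_general V htree w s w0 hwin v
end
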